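/- Consider n data points (xᵢ, yᵢ) with xᵢ ∈ ℝᵈ, yᵢ ∈ {−1, 1}, and the exponential loss f(θ) = (1/n)·Σᵢ exp(−yᵢ·⟨xᵢ, θ⟩). If the data is separable, i.e. there exists θ* with yᵢ·⟨xᵢ, θ*⟩/‖θ*‖_p ≥ γ_p > 0 for all i, then ‖∇f(θ)‖_q ≥ γ_p·f(θ) for all θ, where 1/p + 1/q = 1. -/

import Mathlib

open scoped BigOperators

noncomputable def lpNorm (p : ENNReal) {ι : Type*} [Fintype ι] (x : ι → ℝ) : ℝ :=
  ‖(WithLp.equiv p (ι → ℝ)).symm x‖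

noncomputable def opNorm (p q : ENNReal) {ι κ : Type*} [Fintype ι] [Fintype κ]
    (A : Matrix ι κ ℝ) : ℝ :=
  sSup {c | ∃ x : κ → ℝ, lpNorm p x ≤ 1 ∧ c = lpNorm q (A.mulVec x)}

noncomputable def dotCLM {n : ℕ} (v : Fin n → ℝ) : (Fin n → ℝ) →L[ℝ] ℝ :=
  LinearMap.toContinuousLinearMap (∑ i, v i • (LinearMap.proj i : (Fin n → ℝ) →ₗ[ℝ] ℝ))

noncomputable def mulVecCLM {m n : ℕ} (M : Matrix (Fin m) (Fin n) ℝ) :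
    (Fin n → ℝ) →L[ℝ] (Fin m → ℝ) :=
  LinearMap.toContinuousLinearMap M.mulVecLin

/-! Test the gradient against the separating direction θ*. Every term of the directional
derivative ⟨∇f(θ), θ*⟩ is the corresponding term of f times −yᵢ⟨xᵢ, θ*⟩ ≤ −γ‖θ*‖_p, so
−⟨∇f(θ), θ*⟩ ≥ γ‖θ*‖_p f(θ); Hölder's inequality bounds the left side by ‖∇f(θ)‖_q ‖θ*‖_p. -/

open Finset Matrix

section Holder

variable {ι : Type*} [Fintype ι]

lemma lpNorm_nonneg (p : ENNReal) [Fact (1 ≤ p)] (v : ι → ℝ) : 0 ≤ lpNorm p v :=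
  norm_nonneg ((WithLp.equiv p (ι → ℝ)).symm v)

lemma abs_le_lpNorm_top (v : ι → ℝ) (j : ι) : |v j| ≤ lpNorm ⊤ v := by
  simpa [lpNorm] using norm_le_pi_norm v j

lemma lpNorm_eq_rpow_sum {p : ENNReal} (hp : 0 < p.toReal) (v : ι → ℝ) :
    lpNorm p v = (∑ j, |v j| ^ p.toReal) ^ (1 / p.toReal) := by
  simp [lpNorm, PiLp.norm_eq_sum hp]

lemma lpNorm_one (v : ι → ℝ) : lpNorm 1 v = ∑ j, |v j| := by
  simp [lpNorm_eq_rpow_sum (p := 1) (by simp)]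

lemma sum_abs_mul_abs_le_lpNorm_top_mul_lpNorm_one (u v : ι → ℝ) :
    ∑ j, |u j| * |v j| ≤ lpNorm ⊤ u * lpNorm 1 v := by
  rw [lpNorm_one, mul_sum]
  gcongr with j
  exact abs_le_lpNorm_top u j

lemma sum_abs_mul_abs_le_lpNorm_mul_lpNorm {p q : ENNReal} [p.HolderConjugate q]
    (u v : ι → ℝ) : ∑ j, |u j| * |v j| ≤ lpNorm p u * lpNorm q v := by
  rcases eq_or_ne p ⊤ with rfl | hp
  · obtain rfl : q = 1 := (ENNReal.HolderConjugate.eq_top_iff_eq_one ⊤ q).mp rfl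
    exact sum_abs_mul_abs_le_lpNorm_top_mul_lpNorm_one u v
  rcases eq_or_ne q ⊤ with rfl | hq
  · obtain rfl : p = 1 := (ENNReal.HolderConjugate.eq_top_iff_eq_one ⊤ p).mp rfl
    simpa only [mul_comm] using sum_abs_mul_abs_le_lpNorm_top_mul_lpNorm_one v u
  have hpq := ENNReal.HolderConjugate.toReal_of_ne_top hp hq
  rw [lpNorm_eq_rpow_sum hpq.pos, lpNorm_eq_rpow_sum hpq.symm.pos]
  simpa using Real.inner_le_Lp_mul_Lq univ (fun j => |u j|) (fun j => |v j|) hpq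

lemma abs_dotProduct_le_lpNorm_mul_lpNorm {p q : ENNReal} [p.HolderConjugate q]
    (u v : ι → ℝ) : |u ⬝ᵥ v| ≤ lpNorm p u * lpNorm q v :=
  calc |u ⬝ᵥ v| ≤ ∑ j, |u j * v j| := abs_sum_le_sum_abs _ _
    _ = ∑ j, |u j| * |v j| := by simp only [abs_mul]
    _ ≤ lpNorm p u * lpNorm q v := sum_abs_mul_abs_le_lpNorm_mul_lpNorm u v

end Holder

lemma dotCLM_apply {n : ℕ} (v w : Fin n → ℝ) : dotCLM v w = v ⬝ᵥ w := by
  simp [dotCLM, dotProduct]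

noncomputable def expLoss {n d : ℕ} (x : Fin n → Fin d → ℝ) (y : Fin n → ℝ) (θ : Fin d → ℝ) :
    ℝ :=
  (1 / (n : ℝ)) * ∑ i, Real.exp (-(y i) * (x i ⬝ᵥ θ))

section ExpLoss

variable {n d : ℕ} (x : Fin n → Fin d → ℝ) (y : Fin n → ℝ)

lemma hasFDerivAt_expLoss (θ : Fin d → ℝ) :
    HasFDerivAt (expLoss x y)
      ((1 / (n : ℝ)) • ∑ i, Real.exp (-(y i) * (x i ⬝ᵥ θ)) • (-(y i)) • dotCLM (x i)) θ := by
  have hdot (i : Fin n) : HasFDerivAt (x i ⬝ᵥ ·) (dotCLM (x i)) θ := by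
    rw [show (x i ⬝ᵥ ·) = dotCLM (x i) from funext fun w => (dotCLM_apply _ w).symm]
    exact (dotCLM (x i)).hasFDerivAt
  exact (HasFDerivAt.fun_sum fun i _ => ((hdot i).const_mul (-(y i))).exp).const_mul _

lemma mul_expLoss_le_neg_fderiv_apply {c : ℝ} {v : Fin d → ℝ}
    (hv : ∀ i, c ≤ y i * (x i ⬝ᵥ v)) (θ : Fin d → ℝ) :
    c * expLoss x y θ ≤ -fderiv ℝ (expLoss x y) θ v := by
  rw [(hasFDerivAt_expLoss x y θ).fderiv]
  simp only [expLoss, _root_.smul_apply, FunLike.coe_sum, Finset.sum_apply, dotCLM_apply,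
    smul_eq_mul]
  rw [← mul_neg, ← sum_neg_distrib, mul_left_comm, mul_sum]
  gcongr with i
  have := mul_le_mul_of_nonneg_left (hv i) (Real.exp_pos (-(y i) * (x i ⬝ᵥ θ))).le
  linarith

end ExpLoss

theorem stmt9_general {n d : ℕ} (hn : 0 < n) (p q : ENNReal)
    (hpq : 1/p + 1/q = 1)
    (x : Fin n → Fin d → ℝ) (y : Fin n → ℝ)
    (f : (Fin d → ℝ) → ℝ)
    (hf : ∀ θ, f θ = (1 / (n : ℝ)) * ∑ i, Real.exp (-(y i) * ∑ j, x i j * θ j))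
    (g : (Fin d → ℝ) → (Fin d → ℝ))
    (hgrad : ∀ θ, HasFDerivAt f (dotCLM (g θ)) θ)
    (γ : ℝ) (hγ : 0 < γ) (θstar : Fin d → ℝ)
    (hsep : ∀ i, γ ≤ y i * (∑ j, x i j * θstar j) / lpNorm p θstar) :
    ∀ θ, γ * f θ ≤ lpNorm q (g θ) := by
  intro θ
  have : q.HolderConjugate p := ENNReal.holderConjugate_iff.mpr (by simpa [add_comm] using hpq)
  have : Fact (1 ≤ p) := ⟨ENNReal.HolderConjugate.one_le p q⟩
  obtain rfl : f = expLoss x y := funext hf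
  have hs : 0 < lpNorm p θstar := by
    refine (lpNorm_nonneg p θstar).lt_of_ne' fun h => ?_
    have := hsep ⟨0, hn⟩
    rw [h, div_zero] at this
    exact hγ.not_ge this
  have hdescent := mul_expLoss_le_neg_fderiv_apply x y
    (fun i => (le_div_iff₀ hs).mp (hsep i)) θ
  rw [(hgrad θ).fderiv, dotCLM_apply] at hdescent
  refine le_of_mul_le_mul_right ?_ hs
  calc γ * expLoss x y θ * lpNorm p θstar
      = γ * lpNorm p θstar * expLoss x y θ := by ring
    _ ≤ -(g θ ⬝ᵥ θstar) := hdescent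
    _ ≤ |g θ ⬝ᵥ θstar| := neg_le_abs _
    _ ≤ lpNorm q (g θ) * lpNorm p θstar := abs_dotProduct_le_lpNorm_mul_lpNorm _ _

/-- Exponential loss on separable data satisfies ‖∇f(θ)‖_q ≥ γ_p f(θ). -/
theorem stmt9 {n d : ℕ} (hn : 0 < n) (p q : ENNReal) (hp : 1 ≤ p) (hq : 1 ≤ q)
    (hpq : 1/p + 1/q = 1)
    (x : Fin n → Fin d → ℝ) (y : Fin n → ℝ) (hy : ∀ i, y i = 1 ∨ y i = -1)
    (f : (Fin d → ℝ) → ℝ)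
    (hf : ∀ θ, f θ = (1 / (n : ℝ)) * ∑ i, Real.exp (-(y i) * ∑ j, x i j * θ j))
    (g : (Fin d → ℝ) → (Fin d → ℝ))
    (hgrad : ∀ θ, HasFDerivAt f (dotCLM (g θ)) θ)
    (γ : ℝ) (hγ : 0 < γ) (θstar : Fin d → ℝ)
    (hsep : ∀ i, γ ≤ y i * (∑ j, x i j * θstar j) / lpNorm p θstar) :
    ∀ θ, γ * f θ ≤ lpNorm q (g θ) :=
  stmt9_general hn p q hpq x y f hf g hgrad γ hγ θstar hsep
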